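/- arXiv:2508.05103 — 5 statements merged into one kernel-verified Lean document; each statement's English description precedes it below -/
import Mathlib

section
/- For integers m ≥ 1 and p ≥ 1, the number W(m,p) of words of length 2p over an alphabet of m letters in which every letter appears an even number of times satisfies W(m,p) ≤ 2^p · m^p · p!. -/
/-!
Deleting the first letter of an even word of length `n + 2` together with a later occurrence of
the same letter (one exists by parity) leaves an even word of length `n`. Hence an even word of
length `n + 2` is determined by a position among `n + 1`, a letter and an even word of length `n`,
so `W(n + 2) ≤ (n + 1) · m · W(n)`, and `(2p - 1) · (2p - 3) ⋯ 1 ≤ 2^p · p!`.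
-/

open Finset

theorem Fin.card_filter_univ_succAbove {n : ℕ} (p : Fin (n + 1) → Prop) [DecidablePred p]
    (j : Fin (n + 1)) : #{x | p x} = ite (p j) 1 0 + #{x | p (j.succAbove x)} := by
  simp only [card_filter, Fin.sum_univ_succAbove _ j]

section EvenWords

variable {α : Type*} [DecidableEq α]

theorem card_filter_cons_insertNth_eq {n : ℕ} (j : Fin (n + 1)) (a : α) (v : Fin n → α) (b : α) :
    #{k | (Fin.cons a (Fin.insertNth j a v) : Fin (n + 2) → α) k = b} =
      2 * ite (a = b) 1 0 + #{i | v i = b} := by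
  rw [Fin.card_filter_univ_succ', Fin.card_filter_univ_succAbove _ j]
  simp only [Fin.cons_zero, Fin.cons_succ, Fin.insertNth_apply_same, Fin.insertNth_apply_succAbove]
  ring

variable (α) in
def evenWords [Fintype α] (n : ℕ) : Finset (Fin n → α) :=
  univ.filter fun w => ∀ a : α, Even #{i | w i = a}

variable [Fintype α]

theorem cons_insertNth_mem_evenWords_iff {n : ℕ} (j : Fin (n + 1)) (a : α) (v : Fin n → α) :
    (Fin.cons a (Fin.insertNth j a v) : Fin (n + 2) → α) ∈ evenWords α (n + 2) ↔
      v ∈ evenWords α n := by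
  simp only [evenWords, mem_filter, mem_univ, true_and, card_filter_cons_insertNth_eq,
    Nat.even_add, even_two_mul, true_iff]

theorem exists_succ_eq_zero_of_mem_evenWords {n : ℕ} {w : Fin (n + 2) → α}
    (hw : w ∈ evenWords α (n + 2)) : ∃ j : Fin (n + 1), w j.succ = w 0 := by
  have hcount := (mem_filter.1 hw).2 (w 0)
  rw [Fin.card_filter_univ_succ', if_pos rfl] at hcount
  have : #{j : Fin (n + 1) | w j.succ = w 0} ≠ 0 := fun h => by simp [h] at hcount
  obtain ⟨j, hj⟩ := card_ne_zero.1 this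
  exact ⟨j, (mem_filter.1 hj).2⟩

theorem evenWords_subset_image_cons_insertNth (n : ℕ) :
    evenWords α (n + 2) ⊆ (univ ×ˢ univ ×ˢ evenWords α n).image
      fun x : Fin (n + 1) × α × (Fin n → α) => Fin.cons x.2.1 (Fin.insertNth x.1 x.2.1 x.2.2) := by
  intro w hw
  obtain ⟨j, hj⟩ := exists_succ_eq_zero_of_mem_evenWords hw
  have h_tail : Fin.insertNth j (w 0) (Fin.removeNth j (Fin.tail w)) = Fin.tail w := by
    rw [← hj]
    exact Fin.insertNth_self_removeNth j (Fin.tail w)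
  have hw_eq : (Fin.cons (w 0) (Fin.insertNth j (w 0) (Fin.removeNth j (Fin.tail w))) :
      Fin (n + 2) → α) = w := by
    rw [h_tail, Fin.cons_self_tail]
  refine mem_image.2 ⟨(j, w 0, Fin.removeNth j (Fin.tail w)), ?_, hw_eq⟩
  rw [← hw_eq, cons_insertNth_mem_evenWords_iff] at hw
  simpa using hw

theorem card_evenWords_add_two_le (n : ℕ) :
    #(evenWords α (n + 2)) ≤ (n + 1) * (Fintype.card α * #(evenWords α n)) := by
  calc #(evenWords α (n + 2)) ≤ #(univ ×ˢ univ ×ˢ evenWords α n) :=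
        (card_le_card (evenWords_subset_image_cons_insertNth n)).trans card_image_le
    _ = (n + 1) * (Fintype.card α * #(evenWords α n)) := by simp [card_product]

theorem card_evenWords_two_mul_le (p : ℕ) :
    #(evenWords α (2 * p)) ≤ 2 ^ p * Fintype.card α ^ p * p.factorial := by
  induction p with
  | zero => simp [evenWords]
  | succ q ih =>
    calc #(evenWords α (2 * (q + 1)))
        ≤ (2 * q + 1) * (Fintype.card α * #(evenWords α (2 * q))) :=
          card_evenWords_add_two_le (2 * q)
      _ ≤ (2 * q + 2) * (Fintype.card α * (2 ^ q * Fintype.card α ^ q * q.factorial)) := by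
          gcongr; omega
      _ = 2 ^ (q + 1) * Fintype.card α ^ (q + 1) * (q + 1).factorial := by
          rw [Nat.factorial_succ]; ring

end EvenWords

theorem words_even_count_le_general (m p : ℕ) :
    (Finset.univ.filter (fun w : Fin (2 * p) → Fin m =>
        ∀ a : Fin m, Even (Finset.univ.filter (fun i => w i = a)).card)).card
      ≤ 2 ^ p * m ^ p * p.factorial := by
  have h := card_evenWords_two_mul_le (α := Fin m) p
  rw [Fintype.card_fin] at h
  -- `∀ a : Fin m` is decided by `Nat.decidableForallFin` here, by `Fintype.decidableForallFintype`
  -- in `evenWords`.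
  convert h using 2
  unfold evenWords
  congr

/-- W(m,p) ≤ 2^p · m^p · p!, where W(m,p) counts words of length 2p over an
alphabet of m letters in which each letter appears an even number of times. -/
theorem words_even_count_le (m p : ℕ) (hm : 1 ≤ m) (hp : 1 ≤ p) :
    (Finset.univ.filter (fun w : Fin (2 * p) → Fin m =>
        ∀ a : Fin m, Even (Finset.univ.filter (fun i => w i = a)).card)).card
      ≤ 2 ^ p * m ^ p * p.factorial :=
  words_even_count_le_general m p
end

section
/- For integers m ≥ 1 and p ≥ 1, the difference W(m,p) − N(m,p) between the number of words of length 2p over an alphabet of m letters with all letter-multiplicities even and the number with all nonzero letter-multiplicities equal to 2 satisfies W(m,p) − N(m,p) ≤ (4e)^p · m^{p−1} · p!. -/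
/-!
Pairing up equal letters writes a word `w` all of whose letters have even multiplicity as
`w = g ∘ Prod.fst ∘ e`, where `e : Fin (2p) ≃ Fin p × Fin 2` matches the positions in pairs
and `g : Fin p → Fin m` labels the pairs. Relabelling the pairs so that their second positions
increase, `e` is determined by the embedding `k ↦ e⁻¹ (k, 0)`, which leaves at most
`(2p)! / p! ≤ 4^p p!` matchings. If some letter occurs at least four times, `g` is not injective,
and there are at most `p² m^(p-1)` such labellings; finally `p² ≤ e^p`.
-/

open Finset Function

theorem card_filter_apply_eq_apply_le {α β : Type*} [Fintype α] [DecidableEq α] [Fintype β]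
    [DecidableEq β] {i j : α} (hij : i ≠ j) :
    (univ.filter fun g : α → β => g i = g j).card
      ≤ Fintype.card β ^ (Fintype.card α - 1) := by
  calc (univ.filter fun g : α → β => g i = g j).card
      ≤ (univ : Finset ({k // k ≠ j} → β)).card := by
        refine card_le_card_of_injOn (fun g k => g k) (fun _ _ => mem_coe.2 (mem_univ _)) ?_
        intro g hg g' hg' hgg'
        obtain ⟨-, hg⟩ := mem_filter.1 hg
        obtain ⟨-, hg'⟩ := mem_filter.1 hg'
        funext k
        by_cases hk : k = j
        · subst hk
          rw [← hg, ← hg']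
          exact congrFun hgg' ⟨i, hij⟩
        · exact congrFun hgg' ⟨k, hk⟩
    _ = Fintype.card β ^ (Fintype.card α - 1) := by
        simp [Fintype.card_subtype_compl]

theorem card_filter_not_injective_le {α β : Type*} [Fintype α] [DecidableEq α] [Fintype β]
    [DecidableEq β] :
    (univ.filter fun g : α → β => ¬ Injective g).card
      ≤ Fintype.card α ^ 2 * Fintype.card β ^ (Fintype.card α - 1) := by
  have hsub : (univ.filter fun g : α → β => ¬ Injective g)
      ⊆ (univ : Finset α).offDiag.biUnion fun ij =>
          univ.filter fun g : α → β => g ij.1 = g ij.2 := by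
    intro g hg
    obtain ⟨i, j, hgij, hij⟩ := not_injective_iff.1 (mem_filter.1 hg).2
    exact mem_biUnion.2 ⟨(i, j), by simp [hij], by simp [hgij]⟩
  calc _ ≤ _ := card_le_card hsub
    _ ≤ (univ : Finset α).offDiag.card * Fintype.card β ^ (Fintype.card α - 1) :=
        card_biUnion_le_card_mul _ _ _ fun ij hij =>
          card_filter_apply_eq_apply_le (mem_offDiag.1 hij).2.2
    _ ≤ _ := by
        gcongr
        rw [offDiag_card, card_univ, sq]
        exact Nat.sub_le _ _

theorem exists_equiv_prod_fin_two {ι α κ : Type*} [Fintype ι] [Fintype α] [DecidableEq α]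
    [Fintype κ] (f : ι → α) (heven : ∀ a, Even (univ.filter fun x => f x = a).card)
    (hcard : Fintype.card ι = 2 * Fintype.card κ) :
    ∃ (e : ι ≃ κ × Fin 2) (g : κ → α), ∀ x, f x = g (e x).1 := by
  have hfiber (a : α) : Fintype.card {x // f x = a}
      = Fintype.card (Fin ((univ.filter fun x => f x = a).card / 2) × Fin 2) := by
    rw [Fintype.card_subtype, Fintype.card_prod, Fintype.card_fin, Fintype.card_fin,
      Nat.div_mul_cancel (even_iff_two_dvd.1 (heven a))]
  let e₁ : ι ≃ (Σ a, Fin ((univ.filter fun x => f x = a).card / 2)) × Fin 2 :=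
    (Equiv.sigmaFiberEquiv f).symm.trans
      ((Equiv.sigmaCongrRight fun a => Fintype.equivOfCardEq (hfiber a)).trans
        (Equiv.sigmaProdDistrib _ _).symm)
  have hκ : Fintype.card (Σ a, Fin ((univ.filter fun x => f x = a).card / 2))
      = Fintype.card κ := by
    have := Fintype.card_congr e₁
    rw [Fintype.card_prod, Fintype.card_fin] at this
    omega
  let e₂ := Fintype.equivOfCardEq hκ
  refine ⟨e₁.trans (e₂.prodCongr (Equiv.refl _)), fun k => (e₂.symm k).1, fun x => ?_⟩
  simp [e₁]

theorem card_filter_apply_fst_eq {ι κ α : Type*} [Fintype ι] [Fintype κ] [DecidableEq α]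
    (e : ι ≃ κ × Fin 2) (g : κ → α) (a : α) :
    (univ.filter fun x => g (e x).1 = a).card = 2 * (univ.filter fun k => g k = a).card := by
  have hprod : (univ.filter fun y : κ × Fin 2 => g y.1 = a)
      = (univ.filter fun k => g k = a) ×ˢ univ := by
    ext; simp
  rw [card_equiv e (t := univ.filter fun y : κ × Fin 2 => g y.1 = a) (by simp), hprod,
    card_product, card_univ, Fintype.card_fin, mul_comm]

theorem Equiv.range_symm_mk_one {ι κ : Type*} (e : ι ≃ κ × Fin 2) :
    Set.range (fun k => e.symm (k, 1)) = (Set.range fun k => e.symm (k, 0))ᶜ := by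
  ext x
  simp only [Set.mem_range, Set.mem_compl_iff, Equiv.symm_apply_eq, not_exists]
  obtain ⟨k, i⟩ := e x
  fin_cases i <;> simp

open Classical in
noncomputable def sortedPairings (ι : Type*) [Fintype ι] [LinearOrder ι] (p : ℕ) :
    Finset (ι ≃ Fin p × Fin 2) :=
  univ.filter fun e => StrictMono fun k => e.symm (k, 1)

section SortedPairings

variable {ι : Type*} [Fintype ι] [LinearOrder ι] {p : ℕ}

theorem mem_sortedPairings {e : ι ≃ Fin p × Fin 2} :
    e ∈ sortedPairings ι p ↔ StrictMono fun k => e.symm (k, 1) := by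
  simp [sortedPairings]

theorem card_sortedPairings_le :
    (sortedPairings ι p).card ≤ (Fintype.card ι).descFactorial p := by
  refine (card_le_card_of_injOn (t := (univ : Finset (Fin p ↪ ι)))
    (fun e => ⟨fun k => e.symm (k, 0), e.symm.injective.comp (Prod.mk_left_injective 0)⟩)
    (fun _ _ => mem_coe.2 (mem_univ _)) fun e he e' he' hee' => ?_).trans_eq
    (by rw [card_univ, Fintype.card_embedding_eq, Fintype.card_fin])
  have h0 : (fun k => e.symm (k, 0)) = fun k => e'.symm (k, 0) :=
    congrArg DFunLike.coe hee'
  have h1 : (fun k => e.symm (k, 1)) = fun k => e'.symm (k, 1) := by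
    rw [← StrictMono.range_inj (mem_sortedPairings.1 he) (mem_sortedPairings.1 he'),
      Equiv.range_symm_mk_one, Equiv.range_symm_mk_one, h0]
  rw [← e.symm_symm, ← e'.symm_symm]
  congr 1
  ext ⟨k, i⟩
  fin_cases i
  exacts [congrFun h0 k, congrFun h1 k]

theorem exists_mem_sortedPairings {α : Type*} (e : ι ≃ Fin p × Fin 2) (g : Fin p → α) :
    ∃ e' ∈ sortedPairings ι p, ∃ g' : Fin p → α, ∀ x, g (e x).1 = g' (e' x).1 := by
  let σ := Tuple.sort fun k => e.symm (k, 1)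
  refine ⟨e.trans (σ.symm.prodCongr (Equiv.refl _)), mem_sortedPairings.2 ?_, g ∘ σ,
    fun x => by simp⟩
  exact (Tuple.monotone_sort _).strictMono_of_injective
    ((e.symm.injective.comp (Prod.mk_left_injective 1)).comp σ.injective)

end SortedPairings

theorem mem_image_sortedPairings {ι α : Type*} [Fintype ι] [LinearOrder ι] [Fintype α]
    [DecidableEq α] {p : ℕ} (hcard : Fintype.card ι = 2 * p) {f : ι → α}
    (heven : ∀ a, Even (univ.filter fun x => f x = a).card) {a : α}
    (ha0 : (univ.filter fun x => f x = a).card ≠ 0)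
    (ha2 : (univ.filter fun x => f x = a).card ≠ 2) :
    f ∈ (sortedPairings ι p ×ˢ univ.filter fun g : Fin p → α => ¬ Injective g).image
      fun eg x => eg.2 (eg.1 x).1 := by
  obtain ⟨e₀, g₀, hfg₀⟩ :=
    exists_equiv_prod_fin_two (κ := Fin p) f heven (by rw [hcard, Fintype.card_fin])
  obtain ⟨e, he, g, hgg₀⟩ := exists_mem_sortedPairings e₀ g₀
  obtain rfl : f = fun x => g (e x).1 := funext fun x => (hfg₀ x).trans (hgg₀ x)
  beta_reduce at heven ha0 ha2
  have hga : 1 < (univ.filter fun k => g k = a).card := by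
    have := card_filter_apply_fst_eq e g a
    obtain ⟨r, hr⟩ := heven a
    omega
  obtain ⟨i, hi, j, hj, hij⟩ := one_lt_card.1 hga
  refine mem_image.2 ⟨(e, g), mem_product.2 ⟨he, mem_filter.2 ⟨mem_univ _, ?_⟩⟩, rfl⟩
  exact not_injective_iff.2 ⟨i, j, (mem_filter.1 hi).2.trans (mem_filter.1 hj).2.symm, hij⟩

theorem Nat.descFactorial_two_mul_le (p : ℕ) :
    (2 * p).descFactorial p ≤ 4 ^ p * p.factorial := by
  rw [Nat.descFactorial_eq_factorial_mul_choose, mul_comm]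
  gcongr
  calc (2 * p).choose p ≤ 2 ^ (2 * p) := Nat.choose_le_two_pow _ _
    _ = 4 ^ p := by rw [pow_mul]; norm_num

theorem Real.sq_le_exp_of_nonneg {x : ℝ} (hx : 0 ≤ x) : x ^ 2 ≤ Real.exp x := by
  have h := Real.sum_le_exp_of_nonneg hx 4
  simp only [Finset.sum_range_succ, Finset.sum_range_zero] at h
  norm_num [Nat.factorial] at h
  nlinarith [mul_nonneg hx (sq_nonneg (x - 2))]

theorem card_even_sdiff_pairs_le {ι α : Type*} [Fintype ι] [LinearOrder ι] [Fintype α]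
    [DecidableEq α] {p : ℕ} (hcard : Fintype.card ι = 2 * p) :
    ((univ.filter fun f : ι → α => ∀ a, Even (univ.filter fun x => f x = a).card) \
        univ.filter fun f : ι → α => ∀ a, (univ.filter fun x => f x = a).card = 0 ∨
          (univ.filter fun x => f x = a).card = 2).card
      ≤ 4 ^ p * p.factorial * (p ^ 2 * Fintype.card α ^ (p - 1)) := by
  calc _ ≤ ((sortedPairings ι p ×ˢ univ.filter fun g : Fin p → α => ¬ Injective g).image
          fun eg x => eg.2 (eg.1 x).1).card := by
        refine card_le_card fun f hf => ?_
        obtain ⟨hfW, hfN⟩ := mem_sdiff.1 hf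
        simp only [mem_filter, mem_univ, true_and, not_forall, not_or] at hfN
        obtain ⟨a, ha0, ha2⟩ := hfN
        exact mem_image_sortedPairings hcard (mem_filter.1 hfW).2 ha0 ha2
    _ ≤ (sortedPairings ι p).card * (univ.filter fun g : Fin p → α => ¬ Injective g).card :=
        card_image_le.trans_eq (card_product _ _)
    _ ≤ 4 ^ p * p.factorial * (p ^ 2 * Fintype.card α ^ (p - 1)) := by
        gcongr
        · exact (card_sortedPairings_le.trans_eq (by rw [hcard])).trans
            (Nat.descFactorial_two_mul_le p)
        · simpa using card_filter_not_injective_le (α := Fin p) (β := α)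

theorem words_even_sub_pairs_le_general (m p : ℕ) :
    ((Finset.univ.filter (fun w : Fin (2 * p) → Fin m =>
        ∀ a : Fin m, Even (Finset.univ.filter (fun i => w i = a)).card)).card : ℝ)
      - ((Finset.univ.filter (fun w : Fin (2 * p) → Fin m =>
        ∀ a : Fin m, (Finset.univ.filter (fun i => w i = a)).card = 0 ∨
          (Finset.univ.filter (fun i => w i = a)).card = 2)).card : ℝ)
      ≤ (4 * Real.exp 1) ^ p * (m : ℝ) ^ (p - 1) * p.factorial := by
  set W := univ.filter fun w : Fin (2 * p) → Fin m =>
    ∀ a : Fin m, Even (univ.filter fun i => w i = a).card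
  set N := univ.filter fun w : Fin (2 * p) → Fin m =>
    ∀ a : Fin m, (univ.filter fun i => w i = a).card = 0 ∨
      (univ.filter fun i => w i = a).card = 2
  have hNW : N ⊆ W := fun w hw => mem_filter.2 ⟨mem_univ _, fun a => by
    rcases (mem_filter.1 hw).2 a with h | h <;> simp [h]⟩
  have hcount : (W \ N).card ≤ 4 ^ p * p.factorial * (p ^ 2 * m ^ (p - 1)) := by
    -- `convert` also reconciles the `Decidable` instances of `∀ a : Fin m`
    convert card_even_sdiff_pairs_le (α := Fin m) (Fintype.card_fin (2 * p)) using 4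
    exact (Fintype.card_fin m).symm
  rw [← Nat.cast_sub (card_le_card hNW), ← card_sdiff_of_subset hNW]
  calc ((W \ N).card : ℝ) ≤ 4 ^ p * p.factorial * (p ^ 2 * m ^ (p - 1)) := by
        exact_mod_cast hcount
    _ ≤ 4 ^ p * p.factorial * (Real.exp p * m ^ (p - 1)) := by
        gcongr
        exact Real.sq_le_exp_of_nonneg (Nat.cast_nonneg p)
    _ = (4 * Real.exp 1) ^ p * m ^ (p - 1) * p.factorial := by
        rw [← Real.exp_one_pow]
        ring

/-- W(m,p) − N(m,p) ≤ (4e)^p · m^{p−1} · p!, where W(m,p) counts words of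
length 2p over an alphabet of m letters with all letter multiplicities even,
and N(m,p) counts those whose nonzero letter multiplicities all equal 2. -/
theorem words_even_sub_pairs_le (m p : ℕ) (hm : 1 ≤ m) (hp : 1 ≤ p) :
    ((Finset.univ.filter (fun w : Fin (2 * p) → Fin m =>
        ∀ a : Fin m, Even (Finset.univ.filter (fun i => w i = a)).card)).card : ℝ)
      - ((Finset.univ.filter (fun w : Fin (2 * p) → Fin m =>
        ∀ a : Fin m, (Finset.univ.filter (fun i => w i = a)).card = 0 ∨
          (Finset.univ.filter (fun i => w i = a)).card = 2)).card : ℝ)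
      ≤ (4 * Real.exp 1) ^ p * (m : ℝ) ^ (p - 1) * p.factorial :=
  words_even_sub_pairs_le_general m p
end

section
/- For all integers m ≥ 2 and 1 ≤ p < m, one has m^p − m!/(m−p)! ≤ m^{p−1} · p(p−1)/2. -/
/-!
Factor `m` out of each term: `∏_{j<p} (m - j) = m ^ p ∏_{j<p} (1 - j / m)`. By the Weierstrass product
inequality `∏ (1 - aⱼ) ≥ 1 - ∑ aⱼ` for `aⱼ ∈ [0, 1]`, the deficit `m ^ p - ∏ (m - j)` is at most
`m ^ p ∑_{j<p} j / m = m ^ (p - 1) p (p - 1) / 2`.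
-/

open Finset

namespace Finset

theorem one_sub_sum_le_prod_one_sub {ι R : Type*} [CommRing R] [LinearOrder R] [IsStrictOrderedRing R]
    (s : Finset ι) {f : ι → R} (hf₀ : ∀ i ∈ s, 0 ≤ f i) (hf₁ : ∀ i ∈ s, f i ≤ 1) :
    1 - ∑ i ∈ s, f i ≤ ∏ i ∈ s, (1 - f i) := by
  classical
  induction s using Finset.induction_on with
  | empty => simp
  | insert a s ha ih =>
    simp only [forall_mem_insert] at hf₀ hf₁
    rw [sum_insert ha, prod_insert ha]
    have hP₁ : ∏ i ∈ s, (1 - f i) ≤ 1 :=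
      prod_le_one (fun i hi ↦ sub_nonneg.2 (hf₁.2 i hi)) fun i hi ↦ sub_le_self _ (hf₀.2 i hi)
    have hfP : f a * ∏ i ∈ s, (1 - f i) ≤ f a := mul_le_of_le_one_right hf₀.1 hP₁
    rw [sub_mul, one_mul]
    linarith [ih hf₀.2 hf₁.2]

theorem sum_range_natCast_mul_two {R : Type*} [CommRing R] (n : ℕ) :
    (∑ i ∈ range n, (i : R)) * 2 = n * (n - 1) := by
  induction n with
  | zero => simp
  | succ n ih => rw [sum_range_succ, add_mul, ih]; push_cast; ring

end Finset

theorem pow_sub_falling_factorial_le_general (m p : ℕ)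
    (hp : 1 ≤ p) (hpm : p < m) :
    (m : ℝ) ^ p - ∏ j ∈ Finset.range p, ((m : ℝ) - j)
      ≤ (m : ℝ) ^ (p - 1) * p * (p - 1) / 2 := by
  have hm : (0 : ℝ) < m := Nat.cast_pos.2 (by omega)
  have hj : ∀ j ∈ range p, (j : ℝ) ≤ m := fun j hjp ↦ by
    exact_mod_cast ((mem_range.1 hjp).trans hpm).le
  have hfactor : ∏ j ∈ range p, ((m : ℝ) - j) = m ^ p * ∏ j ∈ range p, (1 - j / (m : ℝ)) := by
    calc ∏ j ∈ range p, ((m : ℝ) - j) = ∏ j ∈ range p, (m : ℝ) * (1 - j / m) :=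
          prod_congr rfl fun j _ ↦ by field_simp
      _ = _ := by rw [← pow_card_mul_prod, card_range]
  have hweier := one_sub_sum_le_prod_one_sub (range p) (f := fun j : ℕ ↦ (j : ℝ) / m)
    (fun j _ ↦ by positivity) fun j hjp ↦ (div_le_one hm).2 (hj j hjp)
  have hpow : (m : ℝ) ^ p = m ^ (p - 1) * m := by rw [← pow_succ, Nat.sub_add_cancel hp]
  calc (m : ℝ) ^ p - ∏ j ∈ range p, ((m : ℝ) - j)
      = m ^ p * (1 - ∏ j ∈ range p, (1 - j / (m : ℝ))) := by rw [hfactor]; ring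
    _ ≤ m ^ p * ∑ j ∈ range p, (j : ℝ) / m := by gcongr; linarith
    _ = m ^ (p - 1) * ((∑ j ∈ range p, (j : ℝ)) * 2) / 2 := by
        rw [← sum_div, hpow]; field_simp
    _ = (m : ℝ) ^ (p - 1) * p * (p - 1) / 2 := by rw [sum_range_natCast_mul_two]; ring

/-- For integers m ≥ 2 and 1 ≤ p < m,
m^p − m(m−1)···(m−p+1) ≤ m^{p−1} · p(p−1)/2. -/
theorem pow_sub_falling_factorial_le (m p : ℕ)
    (hm : 2 ≤ m) (hp : 1 ≤ p) (hpm : p < m) :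
    (m : ℝ) ^ p - ∏ j ∈ Finset.range p, ((m : ℝ) - j)
      ≤ (m : ℝ) ^ (p - 1) * p * (p - 1) / 2 :=
  pow_sub_falling_factorial_le_general m p hp hpm
end

section
/- Let X_1,...,X_p be i.i.d. random variables uniformly distributed on the four 2×2 Pauli matrices, and let w = w_1···w_{2p} be a word in the letters {1,...,p} of length 2p in which each letter appears exactly twice. If pairing equal letters yields a non-crossing pair partition of {1,...,2p}, then E[tr(X_{w_1}···X_{w_{2p}})] = 1, where tr is the normalized trace (1/2)Tr. -/
/-!
The partner of the first letter `x` splits the word as `x s x t`, and non-crossing forces every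
letter of `s` to have its partner inside `s`; so `s` and `t` are again non-crossing pairings.
As the Pauli matrices square to the identity, induction on the length shows that the product is
the identity for every assignment of Pauli matrices, so every term of the average is `tr 1 = 1`.
-/

open Matrix

noncomputable def sigmaX : Matrix (Fin 2) (Fin 2) ℂ := !![0, 1; 1, 0]
noncomputable def sigmaY : Matrix (Fin 2) (Fin 2) ℂ := !![0, -Complex.I; Complex.I, 0]
noncomputable def sigmaZ : Matrix (Fin 2) (Fin 2) ℂ := !![1, 0; 0, -1]

/-- The four Pauli matrices indexed by `Fin 4`. -/
noncomputable def pauli : Fin 4 → Matrix (Fin 2) (Fin 2) ℂ := ![1, sigmaX, sigmaY, sigmaZ]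

theorem pauli_mul_self (m : Fin 4) : pauli m * pauli m = 1 := by
  fin_cases m <;> simp [pauli, sigmaX, sigmaY, sigmaZ, one_fin_two]

section NoncrossingPairing

variable {α : Type*} [DecidableEq α]

/-- Crossings of the pairing of equal letters are exactly the subsequences `a b a b`, `a ≠ b`. -/
def IsNoncrossingPairing (l : List α) : Prop :=
  (∀ a ∈ l, l.count a = 2) ∧ ∀ a b, a ≠ b → ¬ [a, b, a, b].Sublist l

theorem IsNoncrossingPairing.exists_split {x : α} {l : List α}
    (h : IsNoncrossingPairing (x :: l)) :
    ∃ s t, l = s ++ x :: t ∧ IsNoncrossingPairing s ∧ IsNoncrossingPairing t := by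
  obtain ⟨hcount, hnc⟩ := h
  have hx : l.count x = 1 := by simpa using hcount x List.mem_cons_self
  obtain ⟨s, t, rfl⟩ := List.append_of_mem (List.count_pos_iff.mp (hx ▸ Nat.one_pos))
  have hxs : x ∉ s ∧ x ∉ t := by
    simp only [List.count_append, List.count_cons_self] at hx
    exact ⟨List.count_eq_zero.mp (by omega), List.count_eq_zero.mp (by omega)⟩
  have hsub_s : s.Sublist (x :: (s ++ x :: t)) := (List.sublist_append_left s _).cons x
  have hsub_t : t.Sublist (x :: (s ++ x :: t)) := ((List.sublist_cons_self x t).trans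
    (List.sublist_append_right s _)).cons x
  have hdisj : ∀ a ∈ s, a ∉ t := fun a has hat =>
    hnc x a (fun hxa => hxs.1 (hxa ▸ has))
      (((List.singleton_sublist.mpr has).append
        ((List.singleton_sublist.mpr hat).cons_cons x)).cons_cons x)
  refine ⟨s, t, rfl, ⟨fun a ha => ?_, fun a b hab h => hnc a b hab (h.trans hsub_s)⟩,
    ⟨fun a ha => ?_, fun a b hab h => hnc a b hab (h.trans hsub_t)⟩⟩
  · have hax : a ≠ x := fun hax => hxs.1 (hax ▸ ha)
    simpa [List.count_cons, List.count_append, Ne.symm hax, List.count_eq_zero.mpr (hdisj a ha)]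
      using hcount a (hsub_s.subset ha)
  · have hax : a ≠ x := fun hax => hxs.2 (hax ▸ ha)
    have has : a ∉ s := fun has => hdisj a has ha
    simpa [List.count_cons, List.count_append, Ne.symm hax, List.count_eq_zero.mpr has]
      using hcount a (hsub_t.subset ha)

theorem IsNoncrossingPairing.prod_map_eq_one {M : Type*} [Monoid M] {g : α → M}
    (hg : ∀ a, g a * g a = 1) {l : List α} (h : IsNoncrossingPairing l) :
    (l.map g).prod = 1 := by
  match l, h with
  | [], _ => rfl
  | x :: l, h =>
    obtain ⟨s, t, hl, hs, ht⟩ := h.exists_split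
    have hs1 := hs.prod_map_eq_one hg
    have ht1 := ht.prod_map_eq_one hg
    simp [hl, hs1, ht1, hg]
termination_by l.length
decreasing_by all_goals simp only [hl, List.length_append, List.length_cons]; omega

theorem isNoncrossingPairing_ofFn {n : ℕ} {w : Fin n → α}
    (htwice : ∀ a, (Finset.univ.filter (fun i => w i = a)).card = 2)
    (hnc : ¬ ∃ i j k l : Fin n, i < j ∧ j < k ∧ k < l ∧ w i = w k ∧ w j = w l ∧ w i ≠ w j) :
    IsNoncrossingPairing (List.ofFn w) := by
  refine ⟨fun a _ => ?_, fun a b hab hsub => hnc ?_⟩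
  · have hcount := Fin.card_filter_univ_eq_vector_get_eq_count a (List.Vector.ofFn w)
    simp only [List.Vector.get_ofFn, List.Vector.toList_ofFn] at hcount
    rw [← hcount, htwice]
  · obtain ⟨f, hf⟩ := List.sublist_iff_exists_fin_orderEmbedding_get_eq.mp hsub
    let e : Fin 4 ↪o Fin n := f.trans (Fin.castOrderIso List.length_ofFn).toOrderEmbedding
    have he : ∀ m, [a, b, a, b].get m = w (e m) := fun m => (hf m).trans (List.get_ofFn w _)
    refine ⟨e 0, e 1, e 2, e 3, e.strictMono (by decide), e.strictMono (by decide),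
      e.strictMono (by decide), ?_, ?_, ?_⟩
    · exact (he 0).symm.trans (he 2)
    · exact (he 1).symm.trans (he 3)
    · rw [← he 0, ← he 1]; exact hab

end NoncrossingPairing

theorem noncrossing_pauli_word_expectation_general
    (p : ℕ) (w : Fin (2 * p) → Fin p)
    (htwice : ∀ l : Fin p, (Finset.univ.filter (fun i => w i = l)).card = 2)
    (hnc : ¬ ∃ a b c d : Fin (2 * p),
      a < b ∧ b < c ∧ c < d ∧ w a = w c ∧ w b = w d ∧ w a ≠ w b) :
    (1 / 4 ^ p : ℂ) * ∑ X : Fin p → Fin 4,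
        (1 / 2 : ℂ) * Matrix.trace
          ((List.ofFn (fun i : Fin (2 * p) => pauli (X (w i)))).prod) = 1 := by
  have hword : ∀ X : Fin p → Fin 4, (List.ofFn fun i => pauli (X (w i))).prod = 1 := fun X => by
    simpa [List.map_ofFn, Function.comp_def] using
      (isNoncrossingPairing_ofFn htwice hnc).prod_map_eq_one fun l => pauli_mul_self (X l)
  simp [hword]

/-- For X_1,...,X_p i.i.d. uniform on the four Pauli matrices and a word w of length
2p in p letters in which each letter appears exactly twice and whose pairing of equal
letters is non-crossing, E[tr(X_{w_1}···X_{w_{2p}})] = 1 (tr the normalized trace).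
The expectation is the uniform average over all 4^p assignments of Pauli matrices. -/
theorem noncrossing_pauli_word_expectation
    (p : ℕ) (hp : 1 ≤ p) (w : Fin (2 * p) → Fin p)
    (htwice : ∀ l : Fin p, (Finset.univ.filter (fun i => w i = l)).card = 2)
    (hnc : ¬ ∃ a b c d : Fin (2 * p),
      a < b ∧ b < c ∧ c < d ∧ w a = w c ∧ w b = w d ∧ w a ≠ w b) :
    (1 / 4 ^ p : ℂ) * ∑ X : Fin p → Fin 4,
        (1 / 2 : ℂ) * Matrix.trace
          ((List.ofFn (fun i : Fin (2 * p) => pauli (X (w i)))).prod) = 1 :=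
  noncrossing_pauli_word_expectation_general p w htwice hnc
end

section
/- Let X_1,...,X_p be i.i.d. random variables uniformly distributed on the four 2×2 Pauli matrices, and let w be a word in {1,...,p} of length 2p in which each letter appears exactly twice. If pairing equal letters yields a crossing pair partition of {1,...,2p}, then |E[tr(X_{w_1}···X_{w_{2p}})]| ≤ 1/4, where tr denotes the normalized trace (1/2)Tr. -/
/-!
Pick two letters `ℓ = w a`, `m = w b` forming a crossing. Every letter occurs exactly twice, so
the word reads `A x B y C x D y E` with `x = X ℓ`, `y = X m`, and `A, …, E` products of the other
Pauli matrices, hence Pauli group elements independent of `x` and `y`. Averaging over `x` first,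
the twirl `∑ₓ σₓ M σₓ = 2 (Tr M) • 1` turns the sum into `∑_y Tr (σ_y C B) Tr (σ_y E A D)`, and
orthogonality of the Pauli matrices bounds this by `4`. So the average over `x, y` has modulus at
most `4 / 16 = 1 / 4` whatever the other letters are.
-/

open Matrix

open Function

theorem Fintype.sum_sum_update {α β M : Type*} [DecidableEq α] [Fintype α] [Fintype β]
    [AddCommMonoid M] (f : (α → β) → M) (i : α) :
    ∑ X, ∑ x, f (update X i x) = Fintype.card β • ∑ X, f X := by
  let e : Equiv.Perm ((α → β) × β) :=
    Function.Involutive.toPerm (fun q => (update q.1 i q.2, q.1 i)) fun q => by simp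
  calc ∑ X, ∑ x, f (update X i x) = ∑ q, f (e q).1 :=
        (Fintype.sum_prod_type' fun X x => f (update X i x)).symm
    _ = ∑ q : (α → β) × β, f q.1 := Equiv.sum_comp e fun q => f q.1
    _ = Fintype.card β • ∑ X, f X := by
        rw [Fintype.sum_prod_type, Finset.smul_sum]
        simp

namespace List

theorem exists_eq_append_cons_of_cons_sublist {α : Type*} {a : α} {l l' : List α}
    (h : a :: l <+ l') : ∃ s t, l' = s ++ a :: t ∧ l <+ t := by
  obtain ⟨r₁, r₂, rfl, ha, hl⟩ := cons_sublist_iff.1 h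
  obtain ⟨s, t, rfl⟩ := append_of_mem ha
  exact ⟨s, t ++ r₂, by simp, hl.trans (sublist_append_right t r₂)⟩

theorem exists_eq_crossing_of_sublist {α : Type*} [DecidableEq α] {ℓ m : α} {L : List α}
    (hℓm : ℓ ≠ m) (hsub : [ℓ, m, ℓ, m] <+ L) (hℓ : L.count ℓ = 2) (hm : L.count m = 2) :
    ∃ T₁ T₂ T₃ T₄ T₅ : List α, L = T₁ ++ ℓ :: T₂ ++ m :: T₃ ++ ℓ :: T₄ ++ m :: T₅ ∧
      ℓ ∉ T₁ ++ T₂ ++ T₃ ++ T₄ ++ T₅ ∧ m ∉ T₁ ++ T₂ ++ T₃ ++ T₄ ++ T₅ := by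
  obtain ⟨T₁, R₁, rfl, h₁⟩ := exists_eq_append_cons_of_cons_sublist hsub
  obtain ⟨T₂, R₂, rfl, h₂⟩ := exists_eq_append_cons_of_cons_sublist h₁
  obtain ⟨T₃, R₃, rfl, h₃⟩ := exists_eq_append_cons_of_cons_sublist h₂
  obtain ⟨T₄, T₅, rfl, -⟩ := exists_eq_append_cons_of_cons_sublist h₃
  refine ⟨T₁, T₂, T₃, T₄, T₅, by simp, ?_, ?_⟩ <;> rw [← count_eq_zero] <;>
    simp [hℓm, hℓm.symm] at hℓ hm ⊢ <;> omega

theorem map_sublist_ofFn {α : Type*} {n : ℕ} {l : List (Fin n)} (hl : l.Pairwise (· < ·))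
    (w : Fin n → α) : l.map w <+ ofFn w := by
  rw [ofFn_eq_map]
  exact (sublist_of_subperm_of_pairwise (hl.nodup.subperm fun i _ => mem_finRange i) hl
    (pairwise_lt_finRange n)).map w

theorem count_ofFn {α : Type*} [DecidableEq α] {n : ℕ} (w : Fin n → α) (l : α) :
    (ofFn w).count l = (Finset.univ.filter fun i => w i = l).card := by
  rw [← Multiset.coe_count, ← Fin.univ_val_map, Multiset.count_map, Finset.card_def,
    Finset.filter_val]
  simp only [eq_comm]

end List

noncomputable def pauliPhase : Fin 4 → Fin 4 → ℂ :=
  ![![1, 1, 1, 1], ![1, 1, Complex.I, -Complex.I], ![1, -Complex.I, 1, Complex.I],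
    ![1, Complex.I, -Complex.I, 1]]

def pauliMulIndex : Fin 4 → Fin 4 → Fin 4 :=
  ![![0, 1, 2, 3], ![1, 0, 3, 2], ![2, 3, 0, 1], ![3, 2, 1, 0]]

theorem norm_pauliPhase (j k : Fin 4) : ‖pauliPhase j k‖ = 1 := by
  fin_cases j <;> fin_cases k <;> simp [pauliPhase]

theorem pauli_mul_pauli (j k : Fin 4) :
    pauli j * pauli k = pauliPhase j k • pauli (pauliMulIndex j k) := by
  fin_cases j <;> fin_cases k <;> ext r s <;> fin_cases r <;> fin_cases s <;>
    simp [pauli, sigmaX, sigmaY, sigmaZ, pauliPhase, pauliMulIndex, Matrix.mul_apply]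

theorem trace_pauli_mul_pauli (j k : Fin 4) :
    trace (pauli j * pauli k) = if j = k then 2 else 0 := by
  fin_cases j <;> fin_cases k <;>
    simp [pauli, sigmaX, sigmaY, sigmaZ, Matrix.trace_fin_two] <;> norm_num

theorem sum_pauli_mul_mul_pauli (M : Matrix (Fin 2) (Fin 2) ℂ) :
    ∑ x, pauli x * M * pauli x = (2 * M.trace) • 1 := by
  ext r s
  fin_cases r <;> fin_cases s <;>
    simp [pauli, sigmaX, sigmaY, sigmaZ, Fin.sum_univ_four, Matrix.mul_apply,
      Matrix.trace_fin_two, Matrix.sum_apply] <;> ring_nf <;> simp <;> ring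

/-- The Pauli group `{φ σₖ : |φ| = 1}`; its elements are the paper's `φ(g) m(g)`. -/
def pauliGroup : Submonoid (Matrix (Fin 2) (Fin 2) ℂ) where
  carrier := {g | ∃ c : ℂ, ‖c‖ = 1 ∧ ∃ k, g = c • pauli k}
  one_mem' := ⟨1, norm_one, 0, by simp [pauli]⟩
  mul_mem' := by
    rintro _ _ ⟨c, hc, j, rfl⟩ ⟨d, hd, k, rfl⟩
    refine ⟨c * d * pauliPhase j k, by simp [hc, hd, norm_pauliPhase], pauliMulIndex j k, ?_⟩
    rw [smul_mul_smul, pauli_mul_pauli, smul_smul]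

theorem pauli_mem_pauliGroup (k : Fin 4) : pauli k ∈ pauliGroup :=
  ⟨1, norm_one, k, (one_smul _ _).symm⟩

theorem norm_sum_trace_pauli_mul_mul_trace_pauli_mul_le {g h : Matrix (Fin 2) (Fin 2) ℂ}
    (hg : g ∈ pauliGroup) (hh : h ∈ pauliGroup) :
    ‖∑ y, trace (pauli y * g) * trace (pauli y * h)‖ ≤ 4 := by
  obtain ⟨c, hc, j, rfl⟩ := hg
  obtain ⟨d, hd, k, rfl⟩ := hh
  have hsum : ∑ y, trace (pauli y * c • pauli j) * trace (pauli y * d • pauli k)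
      = c * d * if j = k then 4 else 0 := by
    rcases eq_or_ne j k with rfl | hjk
    · simp [trace_pauli_mul_pauli]
      ring
    · simp [trace_pauli_mul_pauli, hjk, hjk.symm]
  rw [hsum, norm_mul, norm_mul, hc, hd]
  split_ifs <;> norm_num

theorem sum_trace_pauli_mul_mul_pauli_mul (M N : Matrix (Fin 2) (Fin 2) ℂ) :
    ∑ x, trace (pauli x * M * pauli x * N) = 2 * trace M * trace N := by
  rw [← trace_sum, ← Finset.sum_mul, sum_pauli_mul_mul_pauli, smul_mul, one_mul, trace_smul,
    smul_eq_mul]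

theorem norm_sum_sum_trace_crossing_le {A B C D E : Matrix (Fin 2) (Fin 2) ℂ}
    (hA : A ∈ pauliGroup) (hB : B ∈ pauliGroup) (hC : C ∈ pauliGroup) (hD : D ∈ pauliGroup)
    (hE : E ∈ pauliGroup) :
    ‖∑ x, ∑ y, (1 / 2 : ℂ) *
      trace (A * pauli x * B * pauli y * C * pauli x * D * pauli y * E)‖ ≤ 4 := by
  have hx : ∀ y, ∑ x, (1 / 2 : ℂ) *
      trace (A * pauli x * B * pauli y * C * pauli x * D * pauli y * E)
      = trace (pauli y * (C * B)) * trace (pauli y * (E * A * D)) := by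
    intro y
    -- Rotate the trace so that both occurrences of `σₓ` sandwich a single block, then twirl.
    have hcyc : ∀ x, trace (A * pauli x * B * pauli y * C * pauli x * D * pauli y * E)
        = trace (pauli x * (B * pauli y * C) * pauli x * (D * pauli y * E * A)) := by
      intro x
      simp only [Matrix.mul_assoc]
      rw [trace_mul_comm A]
      simp only [Matrix.mul_assoc]
    simp only [hcyc, ← Finset.mul_sum, sum_trace_pauli_mul_mul_pauli_mul]
    simp only [Matrix.mul_assoc]
    rw [trace_mul_comm B, trace_mul_comm D]
    simp only [Matrix.mul_assoc]
    ring
  rw [Finset.sum_comm]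
  simp only [hx]
  exact norm_sum_trace_pauli_mul_mul_trace_pauli_mul_le (mul_mem hC hB)
    (mul_mem (mul_mem hE hA) hD)

theorem norm_sum_sum_trace_crossing_word_le {α : Type*} [DecidableEq α] {ℓ m : α} (hℓm : ℓ ≠ m)
    {T₁ T₂ T₃ T₄ T₅ : List α} (hℓ : ℓ ∉ T₁ ++ T₂ ++ T₃ ++ T₄ ++ T₅)
    (hm : m ∉ T₁ ++ T₂ ++ T₃ ++ T₄ ++ T₅) (X : α → Fin 4) :
    ‖∑ x, ∑ y, (1 / 2 : ℂ) * trace (((T₁ ++ ℓ :: T₂ ++ m :: T₃ ++ ℓ :: T₄ ++ m :: T₅).map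
      fun l => pauli (update (update X ℓ x) m y l)).prod)‖ ≤ 4 := by
  set word : List α → Matrix (Fin 2) (Fin 2) ℂ := fun T => (T.map fun l => pauli (X l)).prod
  have hword : ∀ x y T, ℓ ∉ T → m ∉ T →
      (T.map fun l => pauli (update (update X ℓ x) m y l)).prod = word T := by
    intro x y T hℓT hmT
    refine congrArg List.prod (List.map_congr_left fun l hl => ?_)
    rw [update_of_ne (ne_of_mem_of_not_mem hl hmT), update_of_ne (ne_of_mem_of_not_mem hl hℓT)]
  have hmem : ∀ T, word T ∈ pauliGroup := fun T =>
    Submonoid.list_prod_mem _ (by simp [pauli_mem_pauliGroup])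
  simp only [List.mem_append, not_or] at hℓ hm
  have hsplit : ∀ x y, ((T₁ ++ ℓ :: T₂ ++ m :: T₃ ++ ℓ :: T₄ ++ m :: T₅).map
      fun l => pauli (update (update X ℓ x) m y l)).prod = word T₁ * pauli x * word T₂ *
        pauli y * word T₃ * pauli x * word T₄ * pauli y * word T₅ := by
    intro x y
    simp only [List.map_append, List.map_cons, List.prod_append, List.prod_cons, hword, hℓ, hm,
      update_self, update_of_ne hℓm, not_false_eq_true, Matrix.mul_assoc]
  simp only [hsplit]
  exact norm_sum_sum_trace_crossing_le (hmem _) (hmem _) (hmem _) (hmem _) (hmem _)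

theorem crossing_pauli_word_expectation_le_general
    (p : ℕ) (w : Fin (2 * p) → Fin p)
    (htwice : ∀ l : Fin p, (Finset.univ.filter (fun i => w i = l)).card = 2)
    (hcross : ∃ a b c d : Fin (2 * p),
      a < b ∧ b < c ∧ c < d ∧ w a = w c ∧ w b = w d ∧ w a ≠ w b) :
    ‖(1 / 4 ^ p : ℂ) * ∑ X : Fin p → Fin 4,
        (1 / 2 : ℂ) * Matrix.trace
          ((List.ofFn (fun i : Fin (2 * p) => pauli (X (w i)))).prod)‖ ≤ 1 / 4 := by
  obtain ⟨a, b, c, d, hab, hbc, hcd, hac, hbd, hne⟩ := hcross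
  set f : (Fin p → Fin 4) → ℂ := fun X =>
    (1 / 2 : ℂ) * trace ((List.ofFn fun i => pauli (X (w i))).prod)
  have hsub : List.Sublist [w a, w b, w c, w d] (List.ofFn w) :=
    List.map_sublist_ofFn (l := [a, b, c, d]) (by simp; omega) w
  rw [← hac, ← hbd] at hsub
  obtain ⟨T₁, T₂, T₃, T₄, T₅, hsplit, hℓ, hm⟩ := List.exists_eq_crossing_of_sublist hne hsub
    (by rw [List.count_ofFn, htwice]) (by rw [List.count_ofFn, htwice])
  have hofFn : ∀ Y : Fin p → Fin 4,
      List.ofFn (fun i => pauli (Y (w i))) = (List.ofFn w).map fun l => pauli (Y l) :=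
    fun _ => by rw [List.map_ofFn]; rfl
  have hbound : ∀ X, ‖∑ x, ∑ y, f (update (update X (w a) x) (w b) y)‖ ≤ 4 := fun X => by
    simpa only [f, hofFn, hsplit] using norm_sum_sum_trace_crossing_word_le hne hℓ hm X
  have hsum : ∑ X, ∑ x, ∑ y, f (update (update X (w a) x) (w b) y) = 16 * ∑ X, f X := by
    rw [Fintype.sum_sum_update (fun X => ∑ y, f (update X (w b) y)), Fintype.sum_sum_update f]
    simp only [Fintype.card_fin, nsmul_eq_mul]
    norm_num [← mul_assoc]
  have hnorm : ‖∑ X, f X‖ ≤ 4 ^ p / 4 := by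
    have := norm_sum_le_of_le Finset.univ fun X _ => hbound X
    rw [hsum, norm_mul] at this
    simp [Finset.card_univ] at this
    linarith
  rw [norm_mul, norm_div, norm_one, norm_pow, Complex.norm_ofNat]
  calc 1 / 4 ^ p * ‖∑ X, f X‖ ≤ 1 / 4 ^ p * (4 ^ p / 4) := by gcongr
    _ = 1 / 4 := by field_simp

/-- For X_1,...,X_p i.i.d. uniform on the four Pauli matrices and a word w of length
2p in p letters in which each letter appears exactly twice and whose pairing of equal
letters has a crossing, |E[tr(X_{w_1}···X_{w_{2p}})]| ≤ 1/4 (tr the normalized trace).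
The expectation is the uniform average over all 4^p assignments of Pauli matrices. -/
theorem crossing_pauli_word_expectation_le
    (p : ℕ) (hp : 1 ≤ p) (w : Fin (2 * p) → Fin p)
    (htwice : ∀ l : Fin p, (Finset.univ.filter (fun i => w i = l)).card = 2)
    (hcross : ∃ a b c d : Fin (2 * p),
      a < b ∧ b < c ∧ c < d ∧ w a = w c ∧ w b = w d ∧ w a ≠ w b) :
    ‖(1 / 4 ^ p : ℂ) * ∑ X : Fin p → Fin 4,
        (1 / 2 : ℂ) * Matrix.trace
          ((List.ofFn (fun i : Fin (2 * p) => pauli (X (w i)))).prod)‖ ≤ 1 / 4 :=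
  crossing_pauli_word_expectation_le_general p w htwice hcross
end
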